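/- Let (λ₁, x₁) with ‖x₁‖ = 1, λ₁ ≠ 0, be an eigenpair of λ²M + λD + K. Let Q have orthonormal columns with θ₁ the angle between x₁ and span{Q}, cos θ₁ > 0. Let (μ₁, x̂₁) with ‖x̂₁‖ = 1 be an eigenpair of the projected pencil μ²M̂ + μD̂ + K̂ (M̂ = QᴴMQ etc.), and let x̃₁ = Qx̂₁ be the corresponding Ritz vector. Let Â = [[-D̂, -K̂],[I_m, 0]], B̂ = [[M̂, 0],[0, I_m]], and suppose a unitary block decomposition [ŷ₁ᴴ; Ŷᴴ]Â[v̂₁, X̂] = [[α̂, ŝᴴ],[0, L̂]], [ŷ₁ᴴ; Ŷᴴ]B̂[v̂₁, X̂] = [[β̂, t̂ᴴ],[0, N̂]] holds with v̂₁ = [μ₁x̂₁; x̂₁]/√(1+|μ₁|²). If L̂ − λ₁N̂ is invertible with sep(λ₁,(L̂,N̂)) = ‖(L̂ − λ₁N̂)⁻¹‖⁻¹ > 0, then sin∠(x₁, x̃₁) ≤ sin θ₁ + (|λ₁|²‖M‖ + |λ₁|‖D‖ + ‖K‖) tan θ₁ / sep(λ₁,(L̂,N̂)). -/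

import Mathlib

/-!
Write `x₁ = e + Q u` with `u = Qᴴ x₁` and `‖e‖ = sin θ₁`. Since `P(λ₁) x₁ = 0`, the projected
residual is `P̂(λ₁) u = -Qᴴ P(λ₁) e`, of norm at most `(|λ₁|²‖M‖ + |λ₁|‖D‖ + ‖K‖) sin θ₁`.
In the linearization, `w = [λ₁u; u]` satisfies `(Â - λ₁B̂) w = [-P̂(λ₁) u; 0]`. Expanding
`w = γ v̂₁ + X̂ g` in the unitary basis `[v̂₁, X̂]`, the block-triangular form turns this into
`(L̂ - λ₁N̂) g = Ŷᴴ (Â - λ₁B̂) w`, so `‖g‖ ≤ ‖P̂(λ₁) u‖ / sep(λ₁, (L̂, N̂))`. The lower half of `w`,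
which is `u`, is therefore within `‖g‖` of a multiple of `x̂₁`, and the triangle inequality
with `e` gives the bound, using `sin θ₁ ≤ tan θ₁`.
-/

open Matrix Polynomial

/-- Euclidean norm of a complex vector. -/
noncomputable def vnorm {ι : Type*} [Fintype ι] (x : ι → ℂ) : ℝ :=
  Real.sqrt (∑ i, ‖x i‖ ^ 2)

/-- Spectral norm (operator 2-norm) of a complex matrix. -/
noncomputable def spec {ι κ : Type*} [Fintype ι] [Fintype κ] [DecidableEq κ]
    (A : Matrix ι κ ℂ) : ℝ :=
  ‖LinearMap.toContinuousLinearMap (Matrix.toEuclideanLin A)‖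

/-- Sine of the angle between two vectors: distance from a/‖a‖ to span{b}. -/
noncomputable def sAngle {ι : Type*} [Fintype ι] (a b : ι → ℂ) : ℝ :=
  ⨅ α : ℂ, vnorm ((vnorm a)⁻¹ • a - α • b)

section vnorm

variable {ι κ : Type*} [Fintype ι] [Fintype κ]

lemma vnorm_eq_norm_toLp (x : ι → ℂ) : vnorm x = ‖WithLp.toLp 2 x‖ :=
  (EuclideanSpace.norm_eq _).symm

lemma vnorm_nonneg (x : ι → ℂ) : 0 ≤ vnorm x := Real.sqrt_nonneg _

lemma vnorm_sq (x : ι → ℂ) : vnorm x ^ 2 = ∑ i, ‖x i‖ ^ 2 :=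
  Real.sq_sqrt (Finset.sum_nonneg fun _ _ => sq_nonneg _)

lemma vnorm_sq_eq_re_dotProduct (x : ι → ℂ) : vnorm x ^ 2 = (star x ⬝ᵥ x).re := by
  rw [vnorm_eq_norm_toLp, ← inner_self_eq_norm_sq (𝕜 := ℂ), EuclideanSpace.inner_toLp_toLp,
    dotProduct_comm]
  rfl

lemma vnorm_add_le (x y : ι → ℂ) : vnorm (x + y) ≤ vnorm x + vnorm y := by
  simpa only [vnorm_eq_norm_toLp, WithLp.toLp_add] using norm_add_le _ _

lemma vnorm_smul (a : ℂ) (x : ι → ℂ) : vnorm (a • x) = ‖a‖ * vnorm x := by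
  simp only [vnorm_eq_norm_toLp, WithLp.toLp_smul, norm_smul]

lemma vnorm_neg (x : ι → ℂ) : vnorm (-x) = vnorm x := by
  simpa using vnorm_smul (-1) x

lemma vnorm_sumElim_sq (a : ι → ℂ) (b : κ → ℂ) :
    vnorm (Sum.elim a b) ^ 2 = vnorm a ^ 2 + vnorm b ^ 2 := by
  simp only [vnorm_sq, Fintype.sum_sum_type, Sum.elim_inl, Sum.elim_inr]

lemma vnorm_sumElim_zero (a : ι → ℂ) : vnorm (Sum.elim a (0 : κ → ℂ)) = vnorm a := by
  have h := vnorm_sumElim_sq a (0 : κ → ℂ)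
  rw [show vnorm (0 : κ → ℂ) = 0 by simp [vnorm]] at h
  nlinarith [vnorm_nonneg (Sum.elim a (0 : κ → ℂ)), vnorm_nonneg a]

lemma vnorm_comp_inr_le (w : ι ⊕ κ → ℂ) : vnorm (w ∘ Sum.inr) ≤ vnorm w := by
  have h := vnorm_sumElim_sq (w ∘ Sum.inl) (w ∘ Sum.inr)
  rw [Sum.elim_comp_inl_inr] at h
  nlinarith [vnorm_nonneg (w ∘ Sum.inr), vnorm_nonneg (w ∘ Sum.inl), vnorm_nonneg w]

lemma spec_nonneg [DecidableEq κ] (A : Matrix ι κ ℂ) : 0 ≤ spec A := norm_nonneg _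

lemma vnorm_mulVec_le [DecidableEq κ] (A : Matrix ι κ ℂ) (x : κ → ℂ) :
    vnorm (A *ᵥ x) ≤ spec A * vnorm x := by
  rw [vnorm_eq_norm_toLp, vnorm_eq_norm_toLp]
  exact (LinearMap.toContinuousLinearMap (Matrix.toEuclideanLin A)).le_opNorm (WithLp.toLp 2 x)

lemma vnorm_le_spec_inv_mul [DecidableEq ι] {S : Matrix ι ι ℂ} (hS : IsUnit S) (g : ι → ℂ) :
    vnorm g ≤ spec S⁻¹ * vnorm (S *ᵥ g) := by
  simpa only [mulVec_mulVec, nonsing_inv_mul S ((isUnit_iff_isUnit_det S).mp hS), one_mulVec]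
    using vnorm_mulVec_le S⁻¹ (S *ᵥ g)

lemma vnorm_mulVec_of_conjTranspose_mul_self_eq_one [DecidableEq κ] {Q : Matrix ι κ ℂ}
    (hQ : Qᴴ * Q = 1) (z : κ → ℂ) : vnorm (Q *ᵥ z) = vnorm z := by
  have h : vnorm (Q *ᵥ z) ^ 2 = vnorm z ^ 2 := by
    rw [vnorm_sq_eq_re_dotProduct, vnorm_sq_eq_re_dotProduct, star_mulVec,
      ← dotProduct_mulVec, mulVec_mulVec, hQ, one_mulVec]
  nlinarith [vnorm_nonneg (Q *ᵥ z), vnorm_nonneg z]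

lemma vnorm_conjTranspose_mulVec_le [DecidableEq κ] {Q : Matrix ι κ ℂ} (hQ : Qᴴ * Q = 1)
    (v : ι → ℂ) : vnorm (Qᴴ *ᵥ v) ≤ vnorm v := by
  -- `‖Qᴴ v‖² = ⟪v, Q Qᴴ v⟫` and `‖Q Qᴴ v‖ = ‖Qᴴ v‖`, so by Cauchy–Schwarz
  -- `‖Qᴴ v‖² ≤ ‖v‖ ‖Qᴴ v‖`.
  have hsq : vnorm (Qᴴ *ᵥ v) ^ 2 =
      (inner ℂ (WithLp.toLp 2 v) (WithLp.toLp 2 (Q *ᵥ (Qᴴ *ᵥ v)))).re := by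
    rw [vnorm_sq_eq_re_dotProduct, EuclideanSpace.inner_toLp_toLp, star_mulVec,
      conjTranspose_conjTranspose, ← dotProduct_mulVec, dotProduct_comm]
  set w := Qᴴ *ᵥ v
  have hcs : vnorm w ^ 2 ≤ vnorm v * vnorm w := by
    calc vnorm w ^ 2 ≤ ‖inner ℂ (WithLp.toLp 2 v) (WithLp.toLp 2 (Q *ᵥ w))‖ :=
          hsq ▸ Complex.re_le_norm _
      _ ≤ vnorm v * vnorm (Q *ᵥ w) := by
          simpa only [vnorm_eq_norm_toLp] using norm_inner_le_norm _ _
      _ = vnorm v * vnorm w := by rw [vnorm_mulVec_of_conjTranspose_mul_self_eq_one hQ]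
  nlinarith [vnorm_nonneg v, vnorm_nonneg w]

lemma sAngle_le (a b : ι → ℂ) (α : ℂ) : sAngle a b ≤ vnorm ((vnorm a)⁻¹ • a - α • b) :=
  ciInf_le ⟨0, by rintro _ ⟨β, rfl⟩; exact vnorm_nonneg _⟩ α

end vnorm

section unitaryBlocks

variable {ι p : Type*} [Fintype ι] (v : ι → ℂ) (X : Matrix ι p ℂ)

lemma conjTranspose_mul_self_eq_one_of_fromCols [DecidableEq p]
    (h : (fromCols (replicateCol Unit v) X)ᴴ * fromCols (replicateCol Unit v) X = 1) :
    Xᴴ * X = 1 := by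
  rw [conjTranspose_fromCols_eq_fromRows_conjTranspose, fromRows_mul_fromCols,
    ← fromBlocks_one] at h
  exact (fromBlocks_inj.mp h).2.2.2

lemma eq_smul_add_mulVec_of_fromCols [Fintype p] [DecidableEq ι]
    (h : fromCols (replicateCol Unit v) X * (fromCols (replicateCol Unit v) X)ᴴ = 1)
    (w : ι → ℂ) : w = (star v ⬝ᵥ w) • v + X *ᵥ (Xᴴ *ᵥ w) := by
  rw [conjTranspose_fromCols_eq_fromRows_conjTranspose, fromCols_mul_fromRows] at h
  have hcol : (replicateCol Unit v * (replicateCol Unit v)ᴴ) *ᵥ w = (star v ⬝ᵥ w) • v := by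
    ext i
    simp [mulVec, dotProduct, mul_apply, Finset.mul_sum, mul_comm, mul_left_comm]
  rw [← hcol, mulVec_mulVec, ← add_mulVec, h, one_mulVec]

end unitaryBlocks

section quadPencil

variable {ι κ : Type*}

def quadPencil (M D K : Matrix ι ι ℂ) (lam : ℂ) : Matrix ι ι ℂ := lam ^ 2 • M + lam • D + K

lemma quadPencil_conjTranspose_mul_mul [Fintype ι] (M D K : Matrix ι ι ℂ) (Q : Matrix ι κ ℂ)
    (lam : ℂ) :
    quadPencil (Qᴴ * M * Q) (Qᴴ * D * Q) (Qᴴ * K * Q) lam = Qᴴ * quadPencil M D K lam * Q := by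
  simp only [quadPencil, Matrix.mul_add, Matrix.add_mul, Matrix.mul_smul, Matrix.smul_mul]

lemma vnorm_quadPencil_mulVec_le [Fintype ι] [DecidableEq ι] (M D K : Matrix ι ι ℂ) (lam : ℂ)
    (x : ι → ℂ) :
    vnorm (quadPencil M D K lam *ᵥ x) ≤
      (‖lam‖ ^ 2 * spec M + ‖lam‖ * spec D + spec K) * vnorm x := by
  have hM := vnorm_mulVec_le M x
  have hD := vnorm_mulVec_le D x
  have hK := vnorm_mulVec_le K x
  calc vnorm (quadPencil M D K lam *ᵥ x)
      ≤ vnorm (lam ^ 2 • (M *ᵥ x)) + vnorm (lam • (D *ᵥ x)) + vnorm (K *ᵥ x) := by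
        simp only [quadPencil, add_mulVec, smul_mulVec]
        exact (vnorm_add_le _ _).trans (by gcongr; exact vnorm_add_le _ _)
    _ = ‖lam‖ ^ 2 * vnorm (M *ᵥ x) + ‖lam‖ * vnorm (D *ᵥ x) + vnorm (K *ᵥ x) := by
        rw [vnorm_smul, vnorm_smul, norm_pow]
    _ ≤ ‖lam‖ ^ 2 * (spec M * vnorm x) + ‖lam‖ * (spec D * vnorm x) + spec K * vnorm x := by
        gcongr
    _ = (‖lam‖ ^ 2 * spec M + ‖lam‖ * spec D + spec K) * vnorm x := by ring

lemma vnorm_quadPencil_projected_residual_le [Fintype ι] [Fintype κ] [DecidableEq ι]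
    [DecidableEq κ] {M D K : Matrix ι ι ℂ} {Q : Matrix ι κ ℂ}
    (hQ : Qᴴ * Q = 1) {lam : ℂ} {x : ι → ℂ} (heig : quadPencil M D K lam *ᵥ x = 0) :
    vnorm (quadPencil (Qᴴ * M * Q) (Qᴴ * D * Q) (Qᴴ * K * Q) lam *ᵥ (Qᴴ *ᵥ x)) ≤
      (‖lam‖ ^ 2 * spec M + ‖lam‖ * spec D + spec K) * vnorm (x - (Q * Qᴴ) *ᵥ x) := by
  have hres : quadPencil (Qᴴ * M * Q) (Qᴴ * D * Q) (Qᴴ * K * Q) lam *ᵥ (Qᴴ *ᵥ x) =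
      -(Qᴴ *ᵥ (quadPencil M D K lam *ᵥ (x - (Q * Qᴴ) *ᵥ x))) := by
    rw [quadPencil_conjTranspose_mul_mul, mulVec_sub, heig, zero_sub, mulVec_neg, neg_neg,
      ← mulVec_mulVec, ← mulVec_mulVec, ← mulVec_mulVec]
  rw [hres, vnorm_neg]
  exact (vnorm_conjTranspose_mulVec_le hQ _).trans (vnorm_quadPencil_mulVec_le _ _ _ _ _)

def companionA [DecidableEq ι] (D K : Matrix ι ι ℂ) : Matrix (ι ⊕ ι) (ι ⊕ ι) ℂ :=
  fromBlocks (-D) (-K) 1 0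

def companionB [DecidableEq ι] (M : Matrix ι ι ℂ) : Matrix (ι ⊕ ι) (ι ⊕ ι) ℂ :=
  fromBlocks M 0 0 1

lemma companion_mulVec_sumElim [Fintype ι] [DecidableEq ι] (M D K : Matrix ι ι ℂ) (lam : ℂ)
    (u : ι → ℂ) :
    companionA D K *ᵥ Sum.elim (lam • u) u - lam • (companionB M *ᵥ Sum.elim (lam • u) u) =
      Sum.elim (-(quadPencil M D K lam *ᵥ u)) 0 := by
  ext (i | i)
  · simp only [companionA, companionB, quadPencil, fromBlocks_mulVec, Sum.elim_comp_inl,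
      Sum.elim_comp_inr, add_mulVec, smul_mulVec, mulVec_smul, neg_mulVec, one_mulVec,
      zero_mulVec, smul_neg, smul_zero, add_zero, zero_add, Pi.sub_apply, Pi.add_apply,
      Pi.neg_apply, Pi.smul_apply, Sum.elim_inl, smul_eq_mul, neg_add_rev]
    ring
  · simp [companionA, companionB, fromBlocks_mulVec]

end quadPencil

section deflation

variable {ι p : Type*} [Fintype ι] [Fintype p]

lemma deflated_pencil_mulVec {A B : Matrix ι ι ℂ} {X Y : Matrix ι p ℂ} {v w : ι → ℂ} {γ : ℂ}
    {g : p → ℂ} (hw : w = γ • v + X *ᵥ g) (hA : (Yᴴ * A) *ᵥ v = 0) (hB : (Yᴴ * B) *ᵥ v = 0)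
    (lam : ℂ) :
    (Yᴴ * A * X - lam • (Yᴴ * B * X)) *ᵥ g = Yᴴ *ᵥ (A *ᵥ w - lam • (B *ᵥ w)) := by
  simp only [hw, mulVec_add, mulVec_smul, mulVec_sub, mulVec_mulVec, hA, hB, smul_zero, zero_add,
    sub_mulVec, smul_mulVec, Matrix.mul_assoc]

lemma exists_vnorm_sub_smul_le_of_deflation [DecidableEq ι] [DecidableEq p]
    {M D K : Matrix ι ι ℂ} {lam r : ℂ} {xh : ι → ℂ} {v : ι ⊕ ι → ℂ} {X Y : Matrix (ι ⊕ ι) p ℂ}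
    {L N : Matrix p p ℂ} (hv : v ∘ Sum.inr = r • xh) (hX : Xᴴ * X = 1)
    (hV : fromCols (replicateCol Unit v) X * (fromCols (replicateCol Unit v) X)ᴴ = 1)
    (hY : Yᴴ * Y = 1) (hA : (Yᴴ * companionA D K) *ᵥ v = 0) (hB : (Yᴴ * companionB M) *ᵥ v = 0)
    (hL : L = Yᴴ * companionA D K * X) (hN : N = Yᴴ * companionB M * X)
    (hsep : IsUnit (L - lam • N)) (u : ι → ℂ) :
    ∃ α : ℂ, vnorm (u - α • xh) ≤ spec (L - lam • N)⁻¹ * vnorm (quadPencil M D K lam *ᵥ u) := by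
  set w : ι ⊕ ι → ℂ := Sum.elim (lam • u) u
  set γ : ℂ := star v ⬝ᵥ w
  have hw := eq_smul_add_mulVec_of_fromCols v X hV w
  have hg : vnorm (Xᴴ *ᵥ w) ≤ spec (L - lam • N)⁻¹ * vnorm (quadPencil M D K lam *ᵥ u) := by
    refine (vnorm_le_spec_inv_mul hsep _).trans (mul_le_mul_of_nonneg_left ?_ (spec_nonneg _))
    rw [hL, hN, deflated_pencil_mulVec hw hA hB, companion_mulVec_sumElim]
    calc vnorm (Yᴴ *ᵥ Sum.elim (-(quadPencil M D K lam *ᵥ u)) 0)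
        ≤ vnorm (Sum.elim (-(quadPencil M D K lam *ᵥ u)) (0 : ι → ℂ)) :=
          vnorm_conjTranspose_mulVec_le hY _
      _ = vnorm (quadPencil M D K lam *ᵥ u) := by rw [vnorm_sumElim_zero, vnorm_neg]
  have hlower : u - (γ * r) • xh = (X *ᵥ (Xᴴ *ᵥ w)) ∘ Sum.inr := by
    ext i
    have hwi := congrFun hw (Sum.inr i)
    have hvi := congrFun hv i
    simp only [Pi.add_apply, Pi.sub_apply, Pi.smul_apply, Function.comp_apply, smul_eq_mul]
      at hwi hvi ⊢
    rw [hvi, show w (Sum.inr i) = u i from rfl] at hwi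
    linear_combination hwi
  refine ⟨γ * r, ?_⟩
  calc vnorm (u - (γ * r) • xh) = vnorm ((X *ᵥ (Xᴴ *ᵥ w)) ∘ Sum.inr) := by rw [hlower]
    _ ≤ vnorm (Xᴴ *ᵥ w) :=
        (vnorm_comp_inr_le _).trans_eq (vnorm_mulVec_of_conjTranspose_mul_self_eq_one hX _)
    _ ≤ _ := hg

end deflation

theorem stmt12_general {n m : ℕ} (M D K : Matrix (Fin n) (Fin n) ℂ)
    (Q : Matrix (Fin n) (Fin m) ℂ) (hQ : Qᴴ * Q = 1)
    (lam1 : ℂ) (x1 : Fin n → ℂ) (hx1 : vnorm x1 = 1)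
    (heig : (lam1 ^ 2 • M + lam1 • D + K) *ᵥ x1 = 0)
    -- angle θ₁ between x₁ and span{Q}: sin, cos, with cos θ₁ > 0
    (s c : ℝ) (hs : s = vnorm (x1 - (Q * Qᴴ) *ᵥ x1)) (hc : c = vnorm (Qᴴ *ᵥ x1))
    (hcpos : 0 < c)
    -- projected pencil and its Ritz pair (μ₁, x̂₁)
    (Mh Dh Kh : Matrix (Fin m) (Fin m) ℂ)
    (hMh : Mh = Qᴴ * M * Q) (hDh : Dh = Qᴴ * D * Q) (hKh : Kh = Qᴴ * K * Q)
    (mu1 : ℂ) (xh1 : Fin m → ℂ)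
    -- linearization of the projected pencil
    (Ah Bh : Matrix (Fin m ⊕ Fin m) (Fin m ⊕ Fin m) ℂ)
    (hAh : Ah = Matrix.fromBlocks (-Dh) (-Kh) 1 0)
    (hBh : Bh = Matrix.fromBlocks Mh 0 0 1)
    (vh1 : Fin m ⊕ Fin m → ℂ)
    (hvh1 : vh1 = (Real.sqrt (1 + ‖mu1‖ ^ 2) : ℂ)⁻¹ • Sum.elim (mu1 • xh1) xh1)
    -- unitary block decomposition [v̂₁, X̂], [ŷ₁, Ŷ]
    (yh1 : Fin m ⊕ Fin m → ℂ)
    (Xh Yh : Matrix (Fin m ⊕ Fin m) (Fin (2 * m - 1)) ℂ)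
    (hV1 : (Matrix.fromCols (Matrix.replicateCol Unit vh1) Xh)ᴴ *
        Matrix.fromCols (Matrix.replicateCol Unit vh1) Xh = 1)
    (hV2 : Matrix.fromCols (Matrix.replicateCol Unit vh1) Xh *
        (Matrix.fromCols (Matrix.replicateCol Unit vh1) Xh)ᴴ = 1)
    (hY1 : (Matrix.fromCols (Matrix.replicateCol Unit yh1) Yh)ᴴ *
        Matrix.fromCols (Matrix.replicateCol Unit yh1) Yh = 1)
    (hAz : (Yhᴴ * Ah) *ᵥ vh1 = 0) (hBz : (Yhᴴ * Bh) *ᵥ vh1 = 0)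
    (Lh Nh : Matrix (Fin (2 * m - 1)) (Fin (2 * m - 1)) ℂ)
    (hLh : Lh = Yhᴴ * Ah * Xh) (hNh : Nh = Yhᴴ * Bh * Xh)
    (hsep : IsUnit (Lh - lam1 • Nh)) :
    sAngle x1 (Q *ᵥ xh1) ≤ s +
      (‖lam1‖ ^ 2 * spec M + ‖lam1‖ * spec D + spec K) *
        (s / c) / (spec (Lh - lam1 • Nh)⁻¹)⁻¹ := by
  subst hMh hDh hKh hAh hBh
  have hv : vh1 ∘ Sum.inr = (Real.sqrt (1 + ‖mu1‖ ^ 2) : ℂ)⁻¹ • xh1 := by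
    rw [hvh1]; ext i; simp
  obtain ⟨α, hα⟩ := exists_vnorm_sub_smul_le_of_deflation (D := Qᴴ * D * Q) (K := Qᴴ * K * Q)
    hv (conjTranspose_mul_self_eq_one_of_fromCols vh1 Xh hV1) hV2
    (conjTranspose_mul_self_eq_one_of_fromCols yh1 Yh hY1) hAz hBz hLh hNh hsep (Qᴴ *ᵥ x1)
  set R := ‖lam1‖ ^ 2 * spec M + ‖lam1‖ * spec D + spec K
  set σ := spec (Lh - lam1 • Nh)⁻¹
  have hR : 0 ≤ R := by
    have := spec_nonneg M; have := spec_nonneg D; have := spec_nonneg K; positivity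
  have hσ : 0 ≤ σ := spec_nonneg _
  have hss : s ≤ s / c :=
    le_div_self (hs ▸ vnorm_nonneg _) hcpos (hc ▸ hx1 ▸ vnorm_conjTranspose_mulVec_le hQ x1)
  have hRitz : vnorm (Qᴴ *ᵥ x1 - α • xh1) ≤ σ * (R * s) :=
    hα.trans (mul_le_mul_of_nonneg_left (hs ▸ vnorm_quadPencil_projected_residual_le hQ heig) hσ)
  calc sAngle x1 (Q *ᵥ xh1) ≤ vnorm (x1 - α • (Q *ᵥ xh1)) := by
        simpa [hx1] using sAngle_le x1 (Q *ᵥ xh1) α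
    _ ≤ vnorm (x1 - (Q * Qᴴ) *ᵥ x1) + vnorm (Q *ᵥ (Qᴴ *ᵥ x1 - α • xh1)) := by
        convert vnorm_add_le _ _ using 2
        rw [mulVec_sub, mulVec_smul, mulVec_mulVec]
        abel
    _ ≤ s + σ * (R * s) := by
        rw [← hs, vnorm_mulVec_of_conjTranspose_mul_self_eq_one hQ]
        gcongr
    _ ≤ s + R * (s / c) / σ⁻¹ := by
        rw [div_inv_eq_mul, mul_comm σ]
        gcongr

theorem stmt12 {n m : ℕ} (M D K : Matrix (Fin n) (Fin n) ℂ)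
    (Q : Matrix (Fin n) (Fin m) ℂ) (hQ : Qᴴ * Q = 1)
    (lam1 : ℂ) (x1 : Fin n → ℂ) (hx1 : vnorm x1 = 1) (hlam : lam1 ≠ 0)
    (heig : (lam1 ^ 2 • M + lam1 • D + K) *ᵥ x1 = 0)
    -- angle θ₁ between x₁ and span{Q}: sin, cos, with cos θ₁ > 0
    (s c : ℝ) (hs : s = vnorm (x1 - (Q * Qᴴ) *ᵥ x1)) (hc : c = vnorm (Qᴴ *ᵥ x1))
    (hcpos : 0 < c)
    -- projected pencil and its Ritz pair (μ₁, x̂₁)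
    (Mh Dh Kh : Matrix (Fin m) (Fin m) ℂ)
    (hMh : Mh = Qᴴ * M * Q) (hDh : Dh = Qᴴ * D * Q) (hKh : Kh = Qᴴ * K * Q)
    (mu1 : ℂ) (xh1 : Fin m → ℂ) (hxh1 : vnorm xh1 = 1)
    (heigh : (mu1 ^ 2 • Mh + mu1 • Dh + Kh) *ᵥ xh1 = 0)
    -- linearization of the projected pencil
    (Ah Bh : Matrix (Fin m ⊕ Fin m) (Fin m ⊕ Fin m) ℂ)
    (hAh : Ah = Matrix.fromBlocks (-Dh) (-Kh) 1 0)
    (hBh : Bh = Matrix.fromBlocks Mh 0 0 1)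
    (vh1 : Fin m ⊕ Fin m → ℂ)
    (hvh1 : vh1 = (Real.sqrt (1 + ‖mu1‖ ^ 2) : ℂ)⁻¹ • Sum.elim (mu1 • xh1) xh1)
    -- unitary block decomposition [v̂₁, X̂], [ŷ₁, Ŷ]
    (yh1 : Fin m ⊕ Fin m → ℂ)
    (Xh Yh : Matrix (Fin m ⊕ Fin m) (Fin (2 * m - 1)) ℂ)
    (hV1 : (Matrix.fromCols (Matrix.replicateCol Unit vh1) Xh)ᴴ *
        Matrix.fromCols (Matrix.replicateCol Unit vh1) Xh = 1)
    (hV2 : Matrix.fromCols (Matrix.replicateCol Unit vh1) Xh *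
        (Matrix.fromCols (Matrix.replicateCol Unit vh1) Xh)ᴴ = 1)
    (hY1 : (Matrix.fromCols (Matrix.replicateCol Unit yh1) Yh)ᴴ *
        Matrix.fromCols (Matrix.replicateCol Unit yh1) Yh = 1)
    (hY2 : Matrix.fromCols (Matrix.replicateCol Unit yh1) Yh *
        (Matrix.fromCols (Matrix.replicateCol Unit yh1) Yh)ᴴ = 1)
    (hAz : (Yhᴴ * Ah) *ᵥ vh1 = 0) (hBz : (Yhᴴ * Bh) *ᵥ vh1 = 0)
    (Lh Nh : Matrix (Fin (2 * m - 1)) (Fin (2 * m - 1)) ℂ)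
    (hLh : Lh = Yhᴴ * Ah * Xh) (hNh : Nh = Yhᴴ * Bh * Xh)
    (hsep : IsUnit (Lh - lam1 • Nh)) :
    sAngle x1 (Q *ᵥ xh1) ≤ s +
      (‖lam1‖ ^ 2 * spec M + ‖lam1‖ * spec D + spec K) *
        (s / c) / (spec (Lh - lam1 • Nh)⁻¹)⁻¹ :=
  stmt12_general M D K Q hQ lam1 x1 hx1 heig s c hs hc hcpos Mh Dh Kh hMh hDh hKh mu1 xh1 Ah Bh hAh
    hBh vh1 hvh1 yh1 Xh Yh hV1 hV2 hY1 hAz hBz Lh Nh hLh hNh hsep
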